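/- For every z ∈ ℝ and every w = (w₁,…,w_p) ∈ ℝ^p, one has |m̃_{p+1}(z, w₁, …, w_p) − m̃_p(w₁, …, w_p)| ≤ 2|z|, where m̃_{p+1} is evaluated at the (p+1)-tuple obtained by adjoining z to w. -/

import Mathlib

open Classical in
/-- The regularized max-min function `m̃_q`: with `M(z) = max_j z_j` and `m(z) = min_j z_j`,
`m̃_q(z) = ½(M+m) + ½(M−m)·χ((M+m)/(M−m))` when `M > m`, and `m̃_q(z) = z₁` when all
coordinates are equal. -/
noncomputable def mtilde {q : ℕ} (χ : ℝ → ℝ) (z : Fin q → ℝ) : ℝ :=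
  if (⨆ j, z j) = (⨅ j, z j) then (⨆ j, z j)
  else ((⨆ j, z j) + (⨅ j, z j)) / 2 +
    ((⨆ j, z j) - (⨅ j, z j)) / 2 *
      χ (((⨆ j, z j) + (⨅ j, z j)) / ((⨆ j, z j) - (⨅ j, z j)))

/-!
Write `m̃ = F(max, min)` with `F = regMaxMin χ`. Adjoining `z` moves at most one of the max and
the min, and since `χ` is odd, `F(-m, -M) = -F(M, m)`, so it suffices to let the max rise from
`M` to `z > M`. Now `F(·, m)` is the max itself when `m ≥ 0` and the constant `m` on `[m, 0]`,
while for `m < 0` its derivative on `[0, ∞)` is `(1 + χ s + χ' s (1 - s)) / 2` with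
`s = (M + m)/(M - m) ∈ [-1, 1]`, which lies in `[0, 2]` by the assumptions on `χ`
(`χ s ≤ s` for `s ≤ 0` is what keeps it below `2`). Hence `F(·, m)` is `2`-Lipschitz on `[0, ∞)`.
-/

open Set

open Classical in
noncomputable def regMaxMin (χ : ℝ → ℝ) (M m : ℝ) : ℝ :=
  if M = m then M else (M + m) / 2 + (M - m) / 2 * χ ((M + m) / (M - m))

section regMaxMin

variable {χ : ℝ → ℝ} {M m : ℝ}

theorem mtilde_eq_regMaxMin {q : ℕ} (v : Fin q → ℝ) :
    mtilde χ v = regMaxMin χ (⨆ j, v j) (⨅ j, v j) := rfl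

theorem regMaxMin_of_ne (h : M ≠ m) :
    regMaxMin χ M m = (M + m) / 2 + (M - m) / 2 * χ ((M + m) / (M - m)) :=
  if_neg h

theorem regMaxMin_of_nonneg (hχp : ∀ s, 1 ≤ s → χ s = 1) (hm : 0 ≤ m) (hmM : m ≤ M) :
    regMaxMin χ M m = M := by
  rcases hmM.eq_or_lt with rfl | hlt
  · exact if_pos rfl
  have hs : 1 ≤ (M + m) / (M - m) := (one_le_div₀ (sub_pos.2 hlt)).2 (by linarith)
  rw [regMaxMin_of_ne hlt.ne', hχp _ hs]
  ring

theorem regMaxMin_of_nonpos (hχm : ∀ s, s ≤ -1 → χ s = -1) (hM : M ≤ 0) (hmM : m ≤ M) :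
    regMaxMin χ M m = m := by
  rcases hmM.eq_or_lt with rfl | hlt
  · exact if_pos rfl
  have hs : (M + m) / (M - m) ≤ -1 := (div_le_iff₀ (sub_pos.2 hlt)).2 (by linarith)
  rw [regMaxMin_of_ne hlt.ne', hχm _ hs]
  ring

theorem regMaxMin_neg_neg (hχodd : ∀ s, χ (-s) = -χ s) (M m : ℝ) :
    regMaxMin χ (-m) (-M) = -regMaxMin χ M m := by
  by_cases h : M = m
  · subst h; simp [regMaxMin]
  rw [regMaxMin_of_ne h, regMaxMin_of_ne (by contrapose! h; linarith),
    show (-m + -M) / (-m - -M) = -((M + m) / (M - m)) by ring, hχodd]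
  ring

/-- `∂ (regMaxMin χ M m) / ∂M`, written in terms of `s = (M + m) / (M - m)`. -/
noncomputable def regMaxMinDerivLeft (χ : ℝ → ℝ) (s : ℝ) : ℝ :=
  (1 + χ s + deriv χ s * (1 - s)) / 2

theorem hasDerivAt_regMaxMin_left (hχ : Differentiable ℝ χ) {t : ℝ} (hmt : m < t) :
    HasDerivAt (regMaxMin χ · m) (regMaxMinDerivLeft χ ((t + m) / (t - m))) t := by
  have htm : t - m ≠ 0 := (sub_pos.2 hmt).ne'
  have hratio : HasDerivAt (fun t => (t + m) / (t - m)) (-(2 * m) / (t - m) ^ 2) t := by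
    refine (((hasDerivAt_id t).add_const m).div ((hasDerivAt_id t).sub_const m) htm).congr_deriv ?_
    simp only [id, one_mul, mul_one]
    ring
  have hformula := (((hasDerivAt_id t).add_const m).div_const 2).add
    ((((hasDerivAt_id t).sub_const m).div_const 2).mul ((hχ _).hasDerivAt.comp t hratio))
  refine (hformula.congr_of_eventuallyEq ?_).congr_deriv ?_
  · filter_upwards [lt_mem_nhds hmt] with u hu
    exact regMaxMin_of_ne hu.ne'
  · simp only [regMaxMinDerivLeft, id, Function.comp_def]
    field_simp
    ring

theorem abs_regMaxMinDerivLeft_le {s : ℝ} (hχ : Differentiable ℝ χ)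
    (hχm : ∀ s, s ≤ -1 → χ s = -1) (hχp : ∀ s, 1 ≤ s → χ s = 1)
    (hχ'nonneg : ∀ s, 0 ≤ deriv χ s) (hχ'le : ∀ s, deriv χ s ≤ 2)
    (hχle : ∀ s, -1 ≤ s → s ≤ 0 → χ s ≤ s) (hs : s ∈ Icc (-1) 1) :
    |regMaxMinDerivLeft χ s| ≤ 2 := by
  have hmono : Monotone χ := monotone_of_deriv_nonneg hχ hχ'nonneg
  have hlow : -1 ≤ χ s := hχm (-1) le_rfl ▸ hmono hs.1
  have hup : χ s ≤ 1 := hχp 1 le_rfl ▸ hmono hs.2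
  have h1s : 0 ≤ 1 - s := by linarith [hs.2]
  have hd0 : 0 ≤ deriv χ s * (1 - s) := mul_nonneg (hχ'nonneg s) h1s
  have hd2 : deriv χ s * (1 - s) ≤ 2 * (1 - s) := mul_le_mul_of_nonneg_right (hχ'le s) h1s
  rw [regMaxMinDerivLeft, abs_of_nonneg (by linarith)]
  rcases le_total s 0 with hs0 | hs0
  · linarith [hχle s hs.1 hs0]
  · linarith

theorem abs_regMaxMin_sub_le_of_neg (hχ : Differentiable ℝ χ) (hχm : ∀ s, s ≤ -1 → χ s = -1)
    (hχp : ∀ s, 1 ≤ s → χ s = 1) (hχ'nonneg : ∀ s, 0 ≤ deriv χ s) (hχ'le : ∀ s, deriv χ s ≤ 2)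
    (hχle : ∀ s, -1 ≤ s → s ≤ 0 → χ s ≤ s) (hm : m < 0) {a b : ℝ} (ha : 0 ≤ a) (hb : 0 ≤ b) :
    |regMaxMin χ b m - regMaxMin χ a m| ≤ 2 * |b - a| := by
  have hratio (t : ℝ) (ht : t ∈ Ici 0) : (t + m) / (t - m) ∈ Icc (-1) 1 := by
    have htm : 0 < t - m := by linarith [mem_Ici.1 ht]
    exact ⟨(le_div_iff₀ htm).2 (by linarith [mem_Ici.1 ht]), (div_le_one htm).2 (by linarith)⟩
  exact (convex_Ici 0).norm_image_sub_le_of_norm_hasDerivWithin_le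
    (fun t ht => (hasDerivAt_regMaxMin_left hχ (hm.trans_le ht)).hasDerivWithinAt)
    (fun t ht => abs_regMaxMinDerivLeft_le hχ hχm hχp hχ'nonneg hχ'le hχle (hratio t ht)) ha hb

theorem abs_regMaxMin_sub_le_of_lt (hχ : Differentiable ℝ χ) (hχm : ∀ s, s ≤ -1 → χ s = -1)
    (hχp : ∀ s, 1 ≤ s → χ s = 1) (hχ'nonneg : ∀ s, 0 ≤ deriv χ s) (hχ'le : ∀ s, deriv χ s ≤ 2)
    (hχle : ∀ s, -1 ≤ s → s ≤ 0 → χ s ≤ s) {z : ℝ} (hmM : m ≤ M) (hMz : M < z) :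
    |regMaxMin χ z m - regMaxMin χ M m| ≤ 2 * |z| := by
  rcases le_or_gt 0 m with hm | hm
  · rw [regMaxMin_of_nonneg hχp hm (hmM.trans hMz.le), regMaxMin_of_nonneg hχp hm hmM,
      abs_of_pos (sub_pos.2 hMz), abs_of_pos (by linarith)]
    linarith
  rcases le_or_gt z 0 with hz | hz
  · rw [regMaxMin_of_nonpos hχm hz (hmM.trans hMz.le), regMaxMin_of_nonpos hχm (by linarith) hmM,
      sub_self, abs_zero]
    positivity
  -- `regMaxMin χ · m` is constant on `[m, 0]`, so only `[max M 0, z]` contributes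
  have hM₀ : regMaxMin χ M m = regMaxMin χ (max M 0) m := by
    rcases le_total 0 M with hM | hM
    · rw [max_eq_left hM]
    · rw [max_eq_right hM, regMaxMin_of_nonpos hχm hM hmM, regMaxMin_of_nonpos hχm le_rfl hm.le]
  calc |regMaxMin χ z m - regMaxMin χ M m|
      ≤ 2 * |z - max M 0| := hM₀ ▸
        abs_regMaxMin_sub_le_of_neg hχ hχm hχp hχ'nonneg hχ'le hχle hm (le_max_right M 0) hz.le
    _ ≤ 2 * |z| := by
      rw [abs_of_pos (sub_pos.2 (max_lt hMz hz)), abs_of_pos hz]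
      linarith [le_max_right M 0]

end regMaxMin

theorem Fin.ciSup_cons {α : Type*} [ConditionallyCompleteLinearOrder α] {n : ℕ} [NeZero n]
    (z : α) (w : Fin n → α) :
    ⨆ j, (Fin.cons z w : Fin (n + 1) → α) j = max z (⨆ j, w j) := by
  rw [← sSup_range, Fin.range_cons, csSup_insert (finite_range w).bddAbove (range_nonempty w),
    sSup_range]

theorem Fin.ciInf_cons {α : Type*} [ConditionallyCompleteLinearOrder α] {n : ℕ} [NeZero n]
    (z : α) (w : Fin n → α) :
    ⨅ j, (Fin.cons z w : Fin (n + 1) → α) j = min z (⨅ j, w j) := by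
  rw [← sInf_range, Fin.range_cons, csInf_insert (finite_range w).bddBelow (range_nonempty w),
    sInf_range]

theorem stmt_9_general (p : ℕ) (hp : 1 ≤ p) (χ : ℝ → ℝ)
    (hχodd : ∀ s : ℝ, χ (-s) = -χ s) (hχdiff : Differentiable ℝ χ)
    (hχm : ∀ s : ℝ, s ≤ -1 → χ s = -1) (hχp : ∀ s : ℝ, 1 ≤ s → χ s = 1)
    (hχ'nonneg : ∀ s : ℝ, 0 ≤ deriv χ s) (hχ'le : ∀ s : ℝ, deriv χ s ≤ 2)
    (hχle : ∀ s : ℝ, -1 ≤ s → s ≤ 0 → χ s ≤ s)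
    (z : ℝ) (w : Fin p → ℝ) :
    |mtilde χ (Fin.cons z w) - mtilde χ w| ≤ 2 * |z| := by
  have : NeZero p := ⟨by omega⟩
  have hmM : ⨅ j, w j ≤ ⨆ j, w j :=
    ciInf_le_ciSup (finite_range w).bddBelow (finite_range w).bddAbove
  rw [mtilde_eq_regMaxMin, mtilde_eq_regMaxMin, Fin.ciSup_cons, Fin.ciInf_cons]
  generalize ⨆ j, w j = M, ⨅ j, w j = m at hmM ⊢
  rcases lt_or_ge M z with hMz | hzM
  · rw [max_eq_left hMz.le, min_eq_right (hmM.trans hMz.le)]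
    exact abs_regMaxMin_sub_le_of_lt hχdiff hχm hχp hχ'nonneg hχ'le hχle hmM hMz
  rcases lt_or_ge z m with hzm | hmz
  · rw [max_eq_right (hzm.le.trans hmM), min_eq_left hzm.le]
    have := abs_regMaxMin_sub_le_of_lt hχdiff hχm hχp hχ'nonneg hχ'le hχle
      (neg_le_neg hmM) (neg_lt_neg hzm)
    rwa [regMaxMin_neg_neg hχodd, regMaxMin_neg_neg hχodd, neg_sub_neg, abs_sub_comm,
      abs_neg] at this
  · rw [max_eq_right hzM, min_eq_right hmz, sub_self, abs_zero]
    positivity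

/-- Adjoining one coordinate `z` changes `m̃` by at most `2|z|`:
`|m̃_{p+1}(z, w₁, …, w_p) − m̃_p(w₁, …, w_p)| ≤ 2|z|`. -/
theorem stmt_9 (p : ℕ) (hp : 1 ≤ p) (χ : ℝ → ℝ)
    (hχodd : ∀ s : ℝ, χ (-s) = -χ s) (hχdiff : Differentiable ℝ χ)
    (hχm : ∀ s : ℝ, s ≤ -1 → χ s = -1) (hχp : ∀ s : ℝ, 1 ≤ s → χ s = 1)
    (hχ'nonneg : ∀ s : ℝ, 0 ≤ deriv χ s) (hχ'le : ∀ s : ℝ, deriv χ s ≤ 2)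
    (hχle : ∀ s : ℝ, -1 ≤ s → s ≤ 0 → χ s ≤ s)
    (hχge : ∀ s : ℝ, 0 ≤ s → s ≤ 1 → s ≤ χ s)
    (z : ℝ) (w : Fin p → ℝ) :
    |mtilde χ (Fin.cons z w) - mtilde χ w| ≤ 2 * |z| :=
  stmt_9_general p hp χ hχodd hχdiff hχm hχp hχ'nonneg hχ'le hχle z w
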